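/- arXiv:2510.16782 — 3 statements merged into one kernel-verified Lean document; each statement's English description precedes it below -/
import Mathlib

section
/- For the Multiplicative Weights Update algorithm with step size η = √(log n / T)/B over n actions and T rounds, where at round t the strategy is x^(t)(i) ∝ exp(−η Σ_{τ<t} ℓ^(τ)(i)) and loss vectors ℓ^(t) ∈ [0,B]^n are arbitrary, the external regret Σ_t ⟨x^(t), ℓ^(t)⟩ − min_{x ∈ Δ([n])} Σ_t ⟨x, ℓ^(t)⟩ is at most 2B√(T log n). -/
/-!
Track the log-partition function `Φ_t = log ∑ᵢ exp (-η Lᵢ(t))` of the cumulative losses `L(t)`.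
The MWU strategy is the Gibbs distribution of `L(t)`, so
`Φ_{t+1} - Φ_t = log 𝔼_{x^(t)} exp (-η ℓ^(t))`, which by `exp (-z) ≤ 1 - z + z²` and `log s ≤ s - 1`
is at most `-η ⟨x^(t), ℓ^(t)⟩ + η² B²`.
Summing, `Φ_T ≤ log n - η · (loss of MWU) + T η² B²`, while `Φ_T ≥ -η Lᵢ(T)` for every action `i`,
hence `Φ_T ≥ -η ⟨y, L(T)⟩` for every mixed comparator `y`. So `η · regret ≤ log n + T η² B²`,
and the chosen `η` balances the two terms to `η · 2B√(T log n)`.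
-/

open Finset Real

theorem Real.exp_neg_le_one_sub_add_sq {z : ℝ} (hz : 0 ≤ z) : exp (-z) ≤ 1 - z + z ^ 2 := by
  have hpos : 0 < 1 + z := by linarith
  -- `(1 + z) * (1 - z + z ^ 2) = 1 + z ^ 3`
  calc exp (-z) = (exp z)⁻¹ := exp_neg z
    _ ≤ (1 + z)⁻¹ := inv_anti₀ hpos (by linarith [add_one_le_exp z])
    _ ≤ 1 - z + z ^ 2 := by
      rw [inv_le_iff_one_le_mul₀ hpos]
      nlinarith [pow_nonneg hz 3]

theorem Real.log_sum_mul_exp_neg_le {ι : Type*} [Fintype ι] {p l : ι → ℝ} {η B : ℝ}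
    (hp : ∀ i, 0 ≤ p i) (hp1 : ∑ i, p i = 1) (hη : 0 ≤ η) (hl : ∀ i, l i ∈ Set.Icc 0 B) :
    log (∑ i, p i * exp (-(η * l i))) ≤ -(η * ∑ i, p i * l i) + η ^ 2 * B ^ 2 := by
  obtain ⟨k, -, hk⟩ : ∃ k ∈ univ, 0 < p k := by
    by_contra! h
    linarith [sum_nonpos h]
  have hpos : 0 < ∑ i, p i * exp (-(η * l i)) :=
    sum_pos' (fun i _ => mul_nonneg (hp i) (exp_pos _).le) ⟨k, mem_univ k, by positivity⟩
  have hterm : ∀ i, p i * exp (-(η * l i)) ≤ p i - η * (p i * l i) + η ^ 2 * B ^ 2 * p i := by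
    intro i
    obtain ⟨hl0, hlB⟩ := hl i
    have hexp := exp_neg_le_one_sub_add_sq (mul_nonneg hη hl0)
    have hsq : (η * l i) ^ 2 ≤ η ^ 2 * B ^ 2 := by
      rw [← mul_pow]; exact pow_le_pow_left₀ (mul_nonneg hη hl0) (by gcongr) 2
    nlinarith [mul_le_mul_of_nonneg_left hexp (hp i), mul_le_mul_of_nonneg_left hsq (hp i)]
  calc log (∑ i, p i * exp (-(η * l i))) ≤ ∑ i, p i * exp (-(η * l i)) - 1 :=
        log_le_sub_one_of_pos hpos
    _ ≤ ∑ i, (p i - η * (p i * l i) + η ^ 2 * B ^ 2 * p i) - 1 := by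
        gcongr with i; exact hterm i
    _ = -(η * ∑ i, p i * l i) + η ^ 2 * B ^ 2 := by
        rw [sum_add_distrib, sum_sub_distrib, ← mul_sum, ← mul_sum, hp1]; ring

theorem Fin.sum_filter_lt_eq_sum_range {M : Type*} [AddCommMonoid M] {T : ℕ} (f : ℕ → M)
    (t : Fin T) : ∑ τ ∈ univ.filter (· < t), f τ = ∑ k ∈ range t, f k := by
  rw [filter_gt_eq_Iio, ← Nat.Iio_eq_range, ← Fin.map_valEmbedding_Iio, sum_map]
  rfl

theorem mul_two_mul_sqrt_mul_eq {a T B η : ℝ} (ha : 0 ≤ a) (hT : 0 < T) (hB : B ≠ 0)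
    (hη : η = √(a / T) / B) : η * (2 * B * √(T * a)) = a + T * (η ^ 2 * B ^ 2) := by
  have hsqrt : √(a / T) * √(a * T) = a := by
    rw [← sqrt_mul (by positivity), show a / T * (a * T) = a ^ 2 by field_simp, sqrt_sq ha]
  subst hη
  rw [div_pow, sq_sqrt (by positivity)]
  field_simp
  linear_combination 2 * hsqrt

namespace MWU

variable {ι : Type*}

def cumLoss (ℓ : ℕ → ι → ℝ) (t : ℕ) (i : ι) : ℝ :=
  ∑ τ ∈ range t, ℓ τ i

theorem cumLoss_succ (ℓ : ℕ → ι → ℝ) (t : ℕ) : cumLoss ℓ (t + 1) = cumLoss ℓ t + ℓ t :=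
  funext fun i => sum_range_succ (ℓ · i) t

variable [Fintype ι]

noncomputable def gibbs (η : ℝ) (L : ι → ℝ) (i : ι) : ℝ :=
  exp (-η * L i) / ∑ j, exp (-η * L j)

noncomputable def logPartition (η : ℝ) (L : ι → ℝ) : ℝ :=
  log (∑ i, exp (-η * L i))

theorem gibbs_nonneg (η : ℝ) (L : ι → ℝ) (i : ι) : 0 ≤ gibbs η L i := by
  unfold gibbs; positivity

theorem sum_gibbs [Nonempty ι] (η : ℝ) (L : ι → ℝ) : ∑ i, gibbs η L i = 1 := by
  simp only [gibbs, ← sum_div]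
  exact div_self (sum_pos (fun i _ => exp_pos _) univ_nonempty).ne'

theorem logPartition_add_le [Nonempty ι] {η B : ℝ} (hη : 0 ≤ η) (L : ι → ℝ) {l : ι → ℝ}
    (hl : ∀ i, l i ∈ Set.Icc 0 B) :
    logPartition η (L + l) ≤ logPartition η L - η * ∑ i, gibbs η L i * l i + η ^ 2 * B ^ 2 := by
  have hZ : 0 < ∑ i, exp (-η * L i) := sum_pos (fun i _ => exp_pos _) univ_nonempty
  have hfactor : ∑ i, exp (-η * (L + l) i)
      = (∑ i, exp (-η * L i)) * ∑ i, gibbs η L i * exp (-(η * l i)) := by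
    simp only [gibbs, mul_sum, Pi.add_apply, mul_add, exp_add]
    refine sum_congr rfl fun i _ => ?_
    field_simp
  have hpos : 0 < ∑ i, gibbs η L i * exp (-(η * l i)) :=
    sum_pos (fun i _ => mul_pos (div_pos (exp_pos _) hZ) (exp_pos _)) univ_nonempty
  have := log_sum_mul_exp_neg_le (gibbs_nonneg η L) (sum_gibbs η L) hη hl
  rw [logPartition, hfactor, log_mul hZ.ne' hpos.ne', logPartition]
  linarith

theorem neg_mul_sum_le_logPartition {η : ℝ} (L y : ι → ℝ) (hy : ∀ i, 0 ≤ y i)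
    (hy1 : ∑ i, y i = 1) : -η * ∑ i, y i * L i ≤ logPartition η L := by
  have hle : ∀ i, -η * L i ≤ logPartition η L := fun i => by
    rw [logPartition, ← log_exp (-η * L i)]
    exact log_le_log (exp_pos _)
      (single_le_sum (f := fun j => exp (-η * L j)) (fun j _ => (exp_pos _).le) (mem_univ i))
  calc -η * ∑ i, y i * L i = ∑ i, y i * (-η * L i) := by rw [mul_sum]; congr! 1; ring
    _ ≤ ∑ i, y i * logPartition η L := by gcongr with i; exacts [hy i, hle i]
    _ = logPartition η L := by rw [← sum_mul, hy1, one_mul]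

theorem logPartition_cumLoss_le [Nonempty ι] {η B : ℝ} (hη : 0 ≤ η) {ℓ : ℕ → ι → ℝ} {T : ℕ}
    (hℓ : ∀ t < T, ∀ i, ℓ t i ∈ Set.Icc 0 B) :
    logPartition η (cumLoss ℓ T) ≤ log (Fintype.card ι)
      - η * ∑ t ∈ range T, ∑ i, gibbs η (cumLoss ℓ t) i * ℓ t i + T * (η ^ 2 * B ^ 2) := by
  induction T with
  | zero => simp [logPartition, cumLoss]
  | succ T ih =>
    have hstep := logPartition_add_le hη (cumLoss ℓ T) (hℓ T (Nat.lt_succ_self T))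
    rw [cumLoss_succ, sum_range_succ]
    push_cast
    linarith [ih fun t ht => hℓ t (ht.trans (Nat.lt_succ_self T))]

theorem mul_regret_le [Nonempty ι] {η B : ℝ} (hη : 0 ≤ η) {ℓ : ℕ → ι → ℝ} {T : ℕ}
    (hℓ : ∀ t < T, ∀ i, ℓ t i ∈ Set.Icc 0 B) (y : ι → ℝ) (hy : ∀ i, 0 ≤ y i)
    (hy1 : ∑ i, y i = 1) :
    η * (∑ t ∈ range T, ∑ i, gibbs η (cumLoss ℓ t) i * ℓ t i - ∑ t ∈ range T, ∑ i, y i * ℓ t i)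
      ≤ log (Fintype.card ι) + T * (η ^ 2 * B ^ 2) := by
  have hcomparator : ∑ t ∈ range T, ∑ i, y i * ℓ t i = ∑ i, y i * cumLoss ℓ T i := by
    rw [sum_comm]; simp only [cumLoss, mul_sum]
  have := neg_mul_sum_le_logPartition (η := η) (cumLoss ℓ T) y hy hy1
  rw [hcomparator]
  linarith [logPartition_cumLoss_le hη hℓ]

end MWU

open MWU

/-- Regret bound for the Multiplicative Weights Update algorithm with step size
η = √(log n / T)/B: for arbitrary loss vectors in [0,B]^n, the external regret
is at most 2B√(T log n). -/
theorem mwu_regret (n T : ℕ) (B : ℝ) (hB : 0 < B)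
    (ℓ : Fin T → Fin n → ℝ) (hℓ : ∀ t i, ℓ t i ∈ Set.Icc 0 B)
    (η : ℝ) (hη : η = Real.sqrt (Real.log n / T) / B)
    (x : Fin T → Fin n → ℝ)
    (hx : ∀ t i, x t i =
        Real.exp (-η * ∑ τ ∈ Finset.univ.filter (· < t), ℓ τ i)
          / ∑ j, Real.exp (-η * ∑ τ ∈ Finset.univ.filter (· < t), ℓ τ j)) :
    ∀ y : Fin n → ℝ, (∀ i, 0 ≤ y i) → ∑ i, y i = 1 →
      ∑ t, ∑ i, x t i * ℓ t i - ∑ t, ∑ i, y i * ℓ t i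
        ≤ 2 * B * Real.sqrt (T * Real.log n) := by
  intro y hy hy1
  set ℓ' : ℕ → Fin n → ℝ := Function.extend Fin.val ℓ 0
  have hℓ' : ∀ t : Fin T, ℓ' t = ℓ t := Fin.val_injective.extend_apply ℓ 0
  have hx' : ∀ t : Fin T, x t = gibbs η (cumLoss ℓ' t) := fun t => funext fun i => by
    simp only [hx, gibbs, cumLoss, ← Fin.sum_filter_lt_eq_sum_range, hℓ']
  simp only [hx', ← hℓ']
  rw [Fin.sum_univ_eq_sum_range (fun t => ∑ i, gibbs η (cumLoss ℓ' t) i * ℓ' t i),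
    Fin.sum_univ_eq_sum_range (fun t => ∑ i, y i * ℓ' t i)]
  rcases (by omega : T = 0 ∨ n = 0 ∨ n = 1 ∨ (0 < T ∧ 2 ≤ n)) with hT | hn | hn | ⟨hT, hn⟩
  · subst hT; simp
  · subst hn; simp at hy1
  · subst hn
    have hgibbs : ∀ L : Fin 1 → ℝ, gibbs η L 0 = 1 := fun L => by
      simpa using sum_gibbs η L
    simp only [Fin.sum_univ_one, hgibbs] at hy1 ⊢
    simp [hy1]
  · have hlog : 0 < Real.log n := Real.log_pos (by exact_mod_cast hn)
    have hηpos : 0 < η := hη ▸ div_pos (Real.sqrt_pos.2 (by positivity)) hB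
    have : Nonempty (Fin n) := ⟨⟨0, by omega⟩⟩
    have hregret := mul_regret_le hηpos.le (fun t ht i => hℓ' ⟨t, ht⟩ ▸ hℓ ⟨t, ht⟩ i) y hy hy1
    rw [Fintype.card_fin, ← mul_two_mul_sqrt_mul_eq hlog.le (by positivity) hB.ne' hη] at hregret
    exact le_of_mul_le_mul_left hregret hηpos
end

section
/- Given an algorithm A that finds an ε-correlated equilibrium of the hard instance game with success probability at least 1 − δ, one can solve m independent copies of the n-item search problem (finding k_i for each i ∈ [m]) with success probability at least 1 − (δ + εm/B), using a single invocation of A followed by sampling one joint action from the output distribution. -/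
/-!
In the hard instance, player `i`'s loss is `B` times the indicator of missing `k i`, so the
deviation "always play `k i`" has loss `0`: an `ε`-correlated equilibrium puts mass at most `ε / B`
on `a i ≠ k i`. A union bound over the `m` players shows that a joint action sampled from it equals
`k` with probability at least `1 - ε m / B`. Averaging over the algorithm's randomness, where it
fails with probability at most `δ`, gives the bound `1 - (δ + ε m / B)`.
-/

open Finset

section TargetGame

variable {ι α : Type*} [Fintype ι] [Fintype α] [DecidableEq ι] [DecidableEq α]

def targetLoss (B : ℝ) (k : ι → α) (i : ι) (a : ι → α) : ℝ :=
  if a i = k i then 0 else B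

def IsApproxCorrelatedEquilibrium (ε : ℝ) (L : ι → (ι → α) → ℝ) (p : (ι → α) → ℝ) : Prop :=
  ∀ i (φ : α → α), ∑ a, p a * L i a ≤ ∑ a, p a * L i (Function.update a i (φ (a i))) + ε

theorem sum_mul_targetLoss (p : (ι → α) → ℝ) (B : ℝ) (k : ι → α) (i : ι) :
    ∑ a, p a * targetLoss B k i a = B * ∑ a with a i ≠ k i, p a := by
  rw [sum_filter, mul_sum]
  refine sum_congr rfl fun a _ => ?_
  by_cases h : a i = k i <;> simp [targetLoss, h, mul_comm]

theorem sum_mul_targetLoss_update_self (p : (ι → α) → ℝ) (B : ℝ) (k : ι → α) (i : ι) :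
    ∑ a, p a * targetLoss B k i (Function.update a i (k i)) = 0 := by
  simp [targetLoss]

theorem IsApproxCorrelatedEquilibrium.sum_filter_ne_le {ε B : ℝ} {k : ι → α}
    {p : (ι → α) → ℝ} (hp : IsApproxCorrelatedEquilibrium ε (targetLoss B k) p) (hB : 0 < B)
    (i : ι) : ∑ a with a i ≠ k i, p a ≤ ε / B := by
  have hdev := hp i fun _ => k i
  rw [sum_mul_targetLoss, sum_mul_targetLoss_update_self, zero_add] at hdev
  rw [le_div_iff₀ hB]
  linarith

theorem sum_erase_le_sum_sum_filter_ne {p : (ι → α) → ℝ} (hp : ∀ a, 0 ≤ p a) (k : ι → α) :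
    ∑ a ∈ univ.erase k, p a ≤ ∑ i, ∑ a with a i ≠ k i, p a := by
  have hterm : ∀ a i, 0 ≤ if a i ≠ k i then p a else 0 := fun a i => by
    split_ifs
    exacts [hp a, le_rfl]
  calc ∑ a ∈ univ.erase k, p a
      ≤ ∑ a ∈ univ.erase k, ∑ i, if a i ≠ k i then p a else 0 := by
        refine sum_le_sum fun a ha => ?_
        obtain ⟨i, hi⟩ := Function.ne_iff.mp (ne_of_mem_erase ha)
        simpa [hi] using single_le_sum (fun j _ => hterm a j) (mem_univ i)
    _ ≤ ∑ a, ∑ i, if a i ≠ k i then p a else 0 :=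
        sum_le_sum_of_subset_of_nonneg (subset_univ _) fun a _ _ => sum_nonneg fun i _ => hterm a i
    _ = ∑ i, ∑ a with a i ≠ k i, p a := by
        rw [sum_comm]
        simp only [sum_filter]

theorem IsApproxCorrelatedEquilibrium.one_sub_le {ε B : ℝ} {k : ι → α} {p : (ι → α) → ℝ}
    (hp : IsApproxCorrelatedEquilibrium ε (targetLoss B k) p) (hB : 0 < B)
    (hp0 : ∀ a, 0 ≤ p a) (hp1 : ∑ a, p a = 1) :
    1 - p k ≤ ε * Fintype.card ι / B :=
  calc 1 - p k = ∑ a ∈ univ.erase k, p a := by rw [sum_erase_eq_sub (mem_univ k), hp1]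
    _ ≤ ∑ i, ∑ a with a i ≠ k i, p a := sum_erase_le_sum_sum_filter_ne hp0 k
    _ ≤ ∑ _i : ι, ε / B := sum_le_sum fun i _ => hp.sum_filter_ne_le hB i
    _ = ε * Fintype.card ι / B := by rw [sum_const, card_univ, nsmul_eq_mul]; ring

end TargetGame

theorem sum_mul_le_add_of_le_on {Ω : Type*} [Fintype Ω] [DecidableEq Ω] {μ f : Ω → ℝ}
    {S : Finset Ω} {c δ : ℝ}
    (hμ0 : ∀ ω, 0 ≤ μ ω) (hμ1 : ∑ ω, μ ω = 1) (hf : ∀ ω, f ω ≤ 1) (hc : 0 ≤ c)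
    (hSμ : 1 - δ ≤ ∑ ω ∈ S, μ ω) (hS : ∀ ω ∈ S, f ω ≤ c) :
    ∑ ω, μ ω * f ω ≤ δ + c := by
  have hSc : ∑ ω ∈ Sᶜ, μ ω = 1 - ∑ ω ∈ S, μ ω := by rw [← hμ1, ← sum_add_sum_compl S]; ring
  have hS1 : ∑ ω ∈ S, μ ω ≤ 1 := by linarith [sum_nonneg fun ω (_ : ω ∈ Sᶜ) => hμ0 ω]
  calc ∑ ω, μ ω * f ω = ∑ ω ∈ S, μ ω * f ω + ∑ ω ∈ Sᶜ, μ ω * f ω := (sum_add_sum_compl S _).symm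
    _ ≤ ∑ ω ∈ S, μ ω * c + ∑ ω ∈ Sᶜ, μ ω * 1 := by
        gcongr with ω hω ω
        exacts [hμ0 ω, hS ω hω, hμ0 ω, hf ω]
    _ = c * ∑ ω ∈ S, μ ω + (1 - ∑ ω ∈ S, μ ω) := by rw [← sum_mul, ← sum_mul, mul_one, hSc, mul_comm]
    _ ≤ δ + c := by nlinarith

open scoped Classical in
theorem ce_solves_m_fold_search_general (m n : ℕ) (B ε δ : ℝ) (hB : 0 < B) (hε : 0 ≤ ε)
    (k : Fin m → Fin n)
    (L : Fin m → (Fin m → Fin n) → ℝ)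
    (hLdef : ∀ i a, L i a = if a i = k i then 0 else B)
    (Ω : Type*) [Fintype Ω] (μ : Ω → ℝ)
    (hμ0 : ∀ ω, 0 ≤ μ ω) (hμ1 : ∑ ω, μ ω = 1)
    (out : Ω → (Fin m → Fin n) → ℝ)
    (hout0 : ∀ ω a, 0 ≤ out ω a) (hout1 : ∀ ω, ∑ a, out ω a = 1)
    (hsucc : 1 - δ ≤
      ∑ ω ∈ Finset.univ.filter (fun ω => ∀ (i : Fin m) (φ : Fin n → Fin n),
        ∑ a, out ω a * L i a ≤ ∑ a, out ω a * L i (Function.update a i (φ (a i))) + ε),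
        μ ω) :
    1 - (δ + ε * m / B) ≤ ∑ ω, μ ω * out ω k := by
  obtain rfl : L = targetLoss B k := funext₂ hLdef
  have hfail : ∑ ω, μ ω * (1 - out ω k) ≤ δ + ε * m / B :=
    sum_mul_le_add_of_le_on hμ0 hμ1 (fun ω => by linarith [hout0 ω k]) (by positivity) hsucc
      fun ω hω => by
        simpa using IsApproxCorrelatedEquilibrium.one_sub_le (mem_filter.mp hω).2 hB (hout0 ω) (hout1 ω)
  simp only [mul_sub, mul_one, sum_sub_distrib, hμ1] at hfail
  linarith

open scoped Classical in
/-- Reduction: if an algorithm (modeled as a random variable `out` over output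
distributions on a finite probability space (Ω, μ)) produces an ε-correlated
equilibrium of the hard instance game with probability at least 1 - δ, then
sampling one joint action from the output recovers all hidden targets
(k_1,...,k_m), i.e. solves the m-fold n-item search problem, with probability at
least 1 - (δ + εm/B). -/
theorem ce_solves_m_fold_search (m n : ℕ) (B ε δ : ℝ) (hB : 0 < B) (hε : 0 ≤ ε)
    (hδ0 : 0 ≤ δ) (hδ1 : δ ≤ 1)
    (k : Fin m → Fin n)
    (L : Fin m → (Fin m → Fin n) → ℝ)
    (hLdef : ∀ i a, L i a = if a i = k i then 0 else B)
    (Ω : Type*) [Fintype Ω] (μ : Ω → ℝ)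
    (hμ0 : ∀ ω, 0 ≤ μ ω) (hμ1 : ∑ ω, μ ω = 1)
    (out : Ω → (Fin m → Fin n) → ℝ)
    (hout0 : ∀ ω a, 0 ≤ out ω a) (hout1 : ∀ ω, ∑ a, out ω a = 1)
    (hsucc : 1 - δ ≤
      ∑ ω ∈ Finset.univ.filter (fun ω => ∀ (i : Fin m) (φ : Fin n → Fin n),
        ∑ a, out ω a * L i a ≤ ∑ a, out ω a * L i (Function.update a i (φ (a i))) + ε),
        μ ω) :
    1 - (δ + ε * m / B) ≤ ∑ ω, μ ω * out ω k :=
  ce_solves_m_fold_search_general m n B ε δ hB hε k L hLdef Ω μ hμ0 hμ1 out hout0 hout1 hsucc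
end

section
/- Composing deterministic query lower bounds: if finding an ε-correlated equilibrium of the hard instance with success probability at least 2/3 requires solving m independent copies of unstructured search with success probability at least 2/3 − εm/B, and the strong direct product theorem gives Q_{1−k^{m/2}}(f^(m)) ≥ (m·ln(3k/2)/8000)·Q_{1/4}(f) with Q_{1/4}(search on n items) = Ω(√n), then for 0 < ε < min{1/3, 2B/(3m)}, computing an ε-correlated equilibrium of an m-player n-action normal-form game requires Ω(m√n) quantum queries. -/
open Real

lemma mul_log_mul_rpow_two_div {m a t : ℝ} (hm : m ≠ 0) (ha : 0 < a) (ht : 0 < t) :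
    m * log (a * t ^ (2 / m)) = m * log a + 2 * log t := by
  rw [log_mul ha.ne' (rpow_pos_of_pos ht _).ne', log_rpow ht]
  field_simp

lemma sub_two_log_three_le_mul_log {m s : ℝ} (hm : 0 < m) (hs : 0 ≤ s) :
    m * log (3 / 2) - 2 * log 3 ≤ m * log (3 / 2 * (1 / 3 + s) ^ (2 / m)) := by
  have ht : 0 < 1 / 3 + s := by positivity
  have hlog : -log 3 ≤ log (1 / 3 + s) := by
    rw [← log_inv, ← one_div]
    exact log_le_log (by norm_num) (by linarith)
  rw [mul_log_mul_rpow_two_div hm.ne' (by norm_num) ht]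
  linarith

theorem ce_lower_bound_composition_general (m : ℕ) (hm : 1 ≤ m)
    (B ε : ℝ) (hB : 0 < B) (hε0 : 0 < ε)
    (QCE Qdp Qsearch : ℝ) (hQs0 : 0 ≤ Qsearch)
    (hred : Qdp ≤ QCE)
    (hSDPT : m * Real.log (3 / 2 * (1 / 3 + ε * m / B) ^ ((2 : ℝ) / m)) / 8000 * Qsearch
      ≤ Qdp) :
    (m * Real.log (3 / 2) - 2 * Real.log 3) / 8000 * Qsearch ≤ QCE := by
  have hm0 : (0 : ℝ) < m := by exact_mod_cast hm
  have hfactor := sub_two_log_three_le_mul_log (s := ε * m / B) hm0 (by positivity)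
  calc (m * log (3 / 2) - 2 * log 3) / 8000 * Qsearch
      ≤ m * log (3 / 2 * (1 / 3 + ε * m / B) ^ ((2 : ℝ) / m)) / 8000 * Qsearch := by
        gcongr
    _ ≤ Qdp := hSDPT
    _ ≤ QCE := hred

/-- Composing the reduction to m-fold search with the strong direct product
theorem and the Ω(√n) search lower bound: if the query complexity QCE of
computing an ε-correlated equilibrium dominates the complexity Qdp of m-fold
search with success probability 1 − k^{m/2} (where k = (1/3 + εm/B)^{2/m}), and
the SDPT gives Qdp ≥ (m·ln(3k/2)/8000)·Qsearch with Qsearch ≥ c√n, then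
QCE ≥ ((m·ln(3/2) − 2·ln 3)/8000)·Qsearch, i.e. QCE = Ω(m√n). -/
theorem ce_lower_bound_composition (m n : ℕ) (hm : 1 ≤ m) (hn : 1 ≤ n)
    (B ε : ℝ) (hB : 0 < B) (hε0 : 0 < ε) (hε1 : ε < 1 / 3) (hε2 : ε < 2 * B / (3 * m))
    (c QCE Qdp Qsearch : ℝ) (hc : 0 ≤ c) (hQs0 : 0 ≤ Qsearch)
    (hsearch : c * Real.sqrt n ≤ Qsearch)
    (hred : Qdp ≤ QCE)
    (hSDPT : m * Real.log (3 / 2 * (1 / 3 + ε * m / B) ^ ((2 : ℝ) / m)) / 8000 * Qsearch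
      ≤ Qdp) :
    (m * Real.log (3 / 2) - 2 * Real.log 3) / 8000 * Qsearch ≤ QCE :=
  ce_lower_bound_composition_general m hm B ε hB hε0 QCE Qdp Qsearch hQs0 hred hSDPT
end
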